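/- arXiv:2410.00551 — 8 statements merged into one kernel-verified Lean document; each statement's English description precedes it below -/
import Mathlib

section
/- The Hilbert function h : ℤ_{≥0}^r → ℤ_{≥0} of the valuation filtration of a reduced curve singularity satisfies the matroid rank inequality: h(ℓ₁) + h(ℓ₂) ≥ h(min{ℓ₁, ℓ₂}) + h(max{ℓ₁, ℓ₂}) for all lattice points ℓ₁, ℓ₂ ∈ ℤ_{≥0}^r, where min and max are taken componentwise. -/
/-!
The increment `h (ℓ + eᵢ) - h ℓ` is `1` or `0` according as `Δ̄ᵢ(ℓ)` is nonempty, and `Δ̄ᵢ(ℓ)`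
only shrinks when `ℓ` grows in the coordinates `j ≠ i`. So the increment of `h` along a direction
`d` is antitone in the base point, as long as the base points agree on the support of `d`.
Taking the base points `ℓ₁ ⊓ ℓ₂ ≤ ℓ₁` and `d = ℓ₂ - ℓ₁ ⊓ ℓ₂` gives the inequality.
-/

open Finset

/-- Lattice points (we work in `ℤ^r`; nonnegativity is imposed via hypotheses). -/
abbrev Pt (r : ℕ) := Fin r → ℤ

/-- The `i`-th standard basis vector. -/
def E {r : ℕ} (i : Fin r) : Pt r := Pi.single i 1

/-- `e_K = ∑_{i ∈ K} e_i`. -/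
def eK {r : ℕ} (K : Finset (Fin r)) : Pt r := ∑ i ∈ K, E i

/-- `Δ̄ᵢ(ℓ) = {s ∈ S : sᵢ = ℓᵢ, sⱼ ≥ ℓⱼ ∀ j ≠ i}`. -/
def DeltaBarI {r : ℕ} (S : Set (Pt r)) (ℓ : Pt r) (i : Fin r) : Set (Pt r) :=
  {s | s ∈ S ∧ s i = ℓ i ∧ ∀ j, j ≠ i → ℓ j ≤ s j}

/-- `Δᵢ(ℓ) = {s ∈ S : sᵢ = ℓᵢ, sⱼ > ℓⱼ ∀ j ≠ i}`. -/
def DeltaI {r : ℕ} (S : Set (Pt r)) (ℓ : Pt r) (i : Fin r) : Set (Pt r) :=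
  {s | s ∈ S ∧ s i = ℓ i ∧ ∀ j, j ≠ i → ℓ j < s j}

/-- `Δ(ℓ) = ∪ᵢ Δᵢ(ℓ)`. -/
def Delta {r : ℕ} (S : Set (Pt r)) (ℓ : Pt r) : Set (Pt r) := ⋃ i, DeltaI S ℓ i

/-- A good (local) semigroup `S ⊂ ℤ_{≥0}^r` with conductor `c`. -/
structure GoodSemigroup (r : ℕ) where
  S : Set (Pt r)
  c : Pt r
  nonneg : ∀ s ∈ S, (0 : Pt r) ≤ s
  zero_mem : (0 : Pt r) ∈ S
  add_mem : ∀ s ∈ S, ∀ t ∈ S, s + t ∈ S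
  coord_zero : ∀ s ∈ S, ∀ i, s i = 0 → s = 0
  min_mem : ∀ s ∈ S, ∀ t ∈ S, s ⊓ t ∈ S
  prop3 : ∀ s ∈ S, ∀ t ∈ S, ∀ i, s i = t i →
    ∃ u ∈ S, s ⊓ t ≤ u ∧ s i < u i ∧ ∀ j, j ≠ i → s j ≠ t j → u j = (s ⊓ t) j
  conductor_nonneg : (0 : Pt r) ≤ c
  conductor_mem : ∀ ℓ : Pt r, c ≤ ℓ → ℓ ∈ S
  conductor_min : ∀ c' : Pt r, 0 ≤ c' → (∀ ℓ, c' ≤ ℓ → ℓ ∈ S) → c ≤ c'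

/-- `h` is the (combinatorial) Hilbert function of the good semigroup `G`. -/
def IsHilbert {r : ℕ} (G : GoodSemigroup r) (h : Pt r → ℤ) : Prop :=
  h 0 = 0 ∧ ∀ ℓ : Pt r, 0 ≤ ℓ → ∀ i : Fin r,
    (h (ℓ + E i) = h ℓ + 1 ↔ (DeltaBarI G.S ℓ i).Nonempty) ∧
    (h (ℓ + E i) = h ℓ ↔ ¬ (DeltaBarI G.S ℓ i).Nonempty)

/-- `w` is the weight function of the good semigroup `G` (i.e. `w(ℓ) = 2h(ℓ) − |ℓ|`),
characterized by `w(0) = 0` and the step property. -/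
def IsWeight {r : ℕ} (G : GoodSemigroup r) (w : Pt r → ℤ) : Prop :=
  w 0 = 0 ∧ ∀ ℓ : Pt r, 0 ≤ ℓ → ∀ i : Fin r,
    (w (ℓ + E i) = w ℓ + 1 ↔ (DeltaBarI G.S ℓ i).Nonempty) ∧
    (w (ℓ + E i) = w ℓ - 1 ↔ ¬ (DeltaBarI G.S ℓ i).Nonempty)

/-- Generalized local minimum point of the weight function. -/
def GLM {r : ℕ} (w : Pt r → ℤ) (p : Pt r) : Prop :=
  0 ≤ p ∧ ∀ i : Fin r, 1 ≤ p i → w p < w (p - E i)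

/-- Local minimum point of the weight function. -/
def LocMin {r : ℕ} (w : Pt r → ℤ) (p : Pt r) : Prop :=
  GLM w p ∧ ∀ i : Fin r, w p < w (p + E i)

variable {r : ℕ}

lemma DeltaBarI.nonempty_of_le {S : Set (Pt r)} {m m' : Pt r} {i : Fin r} (hle : m ≤ m')
    (hi : m i = m' i) (h' : (DeltaBarI S m' i).Nonempty) : (DeltaBarI S m i).Nonempty := by
  obtain ⟨s, hs, hsi, hsj⟩ := h'
  exact ⟨s, hs, hsi.trans hi.symm, fun j hj => (hle j).trans (hsj j hj)⟩

lemma E_nonneg (i : Fin r) : 0 ≤ E i := Pi.single_nonneg.2 zero_le_one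

namespace IsHilbert

variable {G : GoodSemigroup r} {h : Pt r → ℤ}

open Classical in
lemma sub_eq_ite (hh : IsHilbert G h) {ℓ : Pt r} (hℓ : 0 ≤ ℓ) (i : Fin r) :
    h (ℓ + E i) - h ℓ = if (DeltaBarI G.S ℓ i).Nonempty then 1 else 0 := by
  obtain ⟨hone, hzero⟩ := hh.2 ℓ hℓ i
  split_ifs with hne
  · rw [hone.2 hne]; ring
  · rw [hzero.2 hne]; ring

lemma step_antitone (hh : IsHilbert G h) {m m' : Pt r} (hm : 0 ≤ m) (hle : m ≤ m') {i : Fin r}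
    (hi : m i = m' i) : h (m' + E i) - h m' ≤ h (m + E i) - h m := by
  rw [hh.sub_eq_ite hm, hh.sub_eq_ite (hm.trans hle)]
  have mono := DeltaBarI.nonempty_of_le (S := G.S) hle hi
  split_ifs <;> tauto

lemma increment_antitone (hh : IsHilbert G h) {m m' : Pt r} (hm : 0 ≤ m) (hle : m ≤ m')
    (d : Pt r) (hd : 0 ≤ d) (hdm : ∀ i, 0 < d i → m i = m' i) :
    h (m' + d) - h m' ≤ h (m + d) - h m := by
  by_cases hd₀ : d = 0
  · simp [hd₀]
  obtain ⟨i, hi⟩ : ∃ i, 0 < d i := by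
    by_contra! hneg
    exact hd₀ (funext fun j => le_antisymm (hneg j) (hd j))
  have hEi : E i i = 1 := Pi.single_eq_same i 1
  have hd' : 0 ≤ d - E i := fun j => by
    rcases eq_or_ne j i with rfl | hj
    · simp only [Pi.sub_apply, Pi.zero_apply, hEi]; omega
    · simpa [E, Pi.single_eq_of_ne hj] using hd j
  have ih := increment_antitone hh hm hle (d - E i) hd' fun j hj =>
    hdm j (lt_of_lt_of_le hj (sub_le_self _ (E_nonneg i j)))
  have hstep := hh.step_antitone (add_nonneg hm hd') (add_le_add_left hle _)
    (show m i + (d - E i) i = m' i + (d - E i) i by rw [hdm i hi])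
  rw [← sub_add_cancel d (E i), ← add_assoc, ← add_assoc]
  linarith
termination_by ∑ j, (d j).toNat
decreasing_by
  refine Finset.sum_lt_sum (fun j _ => Int.toNat_le_toNat ?_) ⟨i, mem_univ i, ?_⟩
  · exact sub_le_self _ (E_nonneg i j)
  · simp only [Pi.sub_apply, hEi]; omega

end IsHilbert

/-- the Hilbert function satisfies the matroid rank inequality. -/
theorem stmt2 {r : ℕ} (G : GoodSemigroup r) (h : Pt r → ℤ) (hh : IsHilbert G h) :
    ∀ ℓ₁ ℓ₂ : Pt r, 0 ≤ ℓ₁ → 0 ≤ ℓ₂ →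
      h (ℓ₁ ⊓ ℓ₂) + h (ℓ₁ ⊔ ℓ₂) ≤ h ℓ₁ + h ℓ₂ := by
  intro ℓ₁ ℓ₂ h₁ h₂
  have key := hh.increment_antitone (le_inf h₁ h₂) inf_le_left (ℓ₂ - ℓ₁ ⊓ ℓ₂)
    (sub_nonneg.2 inf_le_right) fun i hi => by
      simp only [Pi.sub_apply, Pi.inf_apply] at hi ⊢
      omega
  have hsup : ℓ₁ + (ℓ₂ - ℓ₁ ⊓ ℓ₂) = ℓ₁ ⊔ ℓ₂ := by
    rw [eq_sub_of_add_eq' (inf_add_sup ℓ₁ ℓ₂)]; abel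
  rw [hsup, add_sub_cancel] at key
  linarith
end

section
/- Let w₀ be the weight function of a good semigroup S ⊂ ℤ_{≥0}^r. For any ℓ, ℓ̄ ∈ ℤ_{≥0}^r with ℓ̄ ≥ 0 and ℓ̄ᵢ = 0 (i.e., i not in the support of ℓ̄): if w₀(ℓ+eᵢ) = w₀(ℓ) − 1 then w₀(ℓ+ℓ̄+eᵢ) = w₀(ℓ+ℓ̄) − 1. Equivalently, if w₀(ℓ+eᵢ) = w₀(ℓ) + 1 then w₀(ℓ−ℓ̄+eᵢ) = w₀(ℓ−ℓ̄) + 1 (whenever ℓ−ℓ̄ ≥ 0). -/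
open Finset

/-! Raising `ℓ` off the `i`-th coordinate only shrinks `Δ̄ᵢ(ℓ)`, so a weight drop in direction `i`
persists upwards and a weight rise persists downwards. -/

theorem DeltaBarI_subset_of_le {r : ℕ} (S : Set (Pt r)) {ℓ ℓ' : Pt r} {i : Fin r}
    (hle : ℓ ≤ ℓ') (hi : ℓ' i = ℓ i) : DeltaBarI S ℓ' i ⊆ DeltaBarI S ℓ i :=
  fun _ ⟨hsS, hsi, hsj⟩ => ⟨hsS, hsi.trans hi, fun j hj => (hle j).trans (hsj j hj)⟩

namespace IsWeight

variable {r : ℕ} {G : GoodSemigroup r} {w : Pt r → ℤ} {ℓ ℓ' : Pt r} {i : Fin r}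

theorem step_down_of_le (hw : IsWeight G w) (hℓ : 0 ≤ ℓ) (hle : ℓ ≤ ℓ') (hi : ℓ' i = ℓ i)
    (hdown : w (ℓ + E i) = w ℓ - 1) : w (ℓ' + E i) = w ℓ' - 1 := by
  have hempty := ((hw.2 ℓ hℓ i).2).mp hdown
  exact ((hw.2 ℓ' (hℓ.trans hle) i).2).mpr fun hne =>
    hempty (hne.mono (DeltaBarI_subset_of_le G.S hle hi))

theorem step_up_of_le (hw : IsWeight G w) (hℓ : 0 ≤ ℓ) (hle : ℓ ≤ ℓ') (hi : ℓ' i = ℓ i)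
    (hup : w (ℓ' + E i) = w ℓ' + 1) : w (ℓ + E i) = w ℓ + 1 := by
  have hne := ((hw.2 ℓ' (hℓ.trans hle) i).1).mp hup
  exact ((hw.2 ℓ hℓ i).1).mpr (hne.mono (DeltaBarI_subset_of_le G.S hle hi))

end IsWeight

/-- stability property of the weight function. -/
theorem stmt3 {r : ℕ} (G : GoodSemigroup r) (w : Pt r → ℤ) (hw : IsWeight G w) :
    ∀ ℓ ℓbar : Pt r, 0 ≤ ℓ → 0 ≤ ℓbar → ∀ i : Fin r, ℓbar i = 0 →
      ((w (ℓ + E i) = w ℓ - 1 → w (ℓ + ℓbar + E i) = w (ℓ + ℓbar) - 1) ∧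
       (0 ≤ ℓ - ℓbar → w (ℓ + E i) = w ℓ + 1 →
          w (ℓ - ℓbar + E i) = w (ℓ - ℓbar) + 1)) := by
  intro ℓ ℓbar hℓ hℓbar i hibar
  exact ⟨hw.step_down_of_le hℓ (le_add_of_nonneg_right hℓbar) (by simp [hibar]),
    fun hsub => hw.step_up_of_le hsub (sub_le_self ℓ hℓbar) (by simp [hibar])⟩
end

section
/- Let S ⊂ ℤ_{≥0}^r be a good semigroup with weight function w. A nonzero lattice point p > 0 is a generalized local minimum point of w (i.e., w(p) < w(p−eᵢ) for every i with pᵢ ≥ 1) if and only if Δ(p − 𝟏) = ∅, where 𝟏 = (1,…,1). Moreover, p is a local minimum point (i.e., additionally w(p) < w(p+eᵢ) for all i) if and only if p ∈ S and Δ(p − 𝟏) = ∅. -/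
open Finset

lemma step_lt {r : ℕ} (G : GoodSemigroup r) (w : Pt r → ℤ) (hw : IsWeight G w)
    (ℓ : Pt r) (hℓ : 0 ≤ ℓ) (i : Fin r) :
    w ℓ < w (ℓ + E i) ↔ (DeltaBarI G.S ℓ i).Nonempty := by
  obtain ⟨h1, h2⟩ := hw.2 ℓ hℓ i
  constructor
  · intro hlt
    by_contra hne
    have := h2.mpr hne; omega
  · intro hne
    have := h1.mpr hne; omega

lemma step_gt {r : ℕ} (G : GoodSemigroup r) (w : Pt r → ℤ) (hw : IsWeight G w)
    (ℓ : Pt r) (hℓ : 0 ≤ ℓ) (i : Fin r) :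
    w (ℓ + E i) < w ℓ ↔ (DeltaBarI G.S ℓ i) = ∅ := by
  rw [← Set.not_nonempty_iff_eq_empty]
  obtain ⟨h1, h2⟩ := hw.2 ℓ hℓ i
  constructor
  · intro hlt hne
    have := h1.mpr hne; omega
  · intro hne
    have := h2.mpr hne; omega

lemma E_apply {r : ℕ} (i j : Fin r) : E i j = if j = i then 1 else 0 := by
  simp [E, Pi.single_apply]

lemma DeltaI_eq_bar {r : ℕ} (S : Set (Pt r)) (p : Pt r) (i : Fin r) :
    DeltaI S (p - 1) i = DeltaBarI S (p - E i) i := by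
  ext s
  simp only [DeltaI, DeltaBarI, Set.mem_setOf_eq, Pi.sub_apply, Pi.one_apply, E_apply]
  constructor
  · rintro ⟨hs, hi, hj⟩
    exact ⟨hs, by simpa using hi, fun j hj' => by have := hj j hj'; simp [hj']; omega⟩
  · rintro ⟨hs, hi, hj⟩
    exact ⟨hs, by simpa using hi, fun j hj' => by have := hj j hj'; simp [hj'] at this; omega⟩

lemma mem_iff_bar {r : ℕ} (G : GoodSemigroup r) (p : Pt r) (hp : 0 ≤ p) :
    p ∈ G.S ↔ ∀ i, (DeltaBarI G.S p i).Nonempty := by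
  constructor
  · intro h i
    exact ⟨p, h, rfl, fun j _ => le_refl _⟩
  · intro h
    have key : ∀ K : Finset (Fin r), ∃ t ∈ G.S, (∀ j, p j ≤ t j) ∧ ∀ i ∈ K, t i = p i := by
      intro K
      induction K using Finset.induction_on with
      | empty =>
        refine ⟨p + G.c, G.conductor_mem _ fun j => ?_, fun j => ?_, by simp⟩
        · have h1 : (0:ℤ) ≤ p j := by simpa using hp j
          simp only [Pi.add_apply]; linarith
        · have h1 : (0:ℤ) ≤ G.c j := by simpa using G.conductor_nonneg j
          simp only [Pi.add_apply]; linarith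
      | @insert i K hni ih =>
        obtain ⟨t, htS, htge, hteq⟩ := ih
        obtain ⟨s, hsS, hsi, hsge⟩ := h i
        refine ⟨s ⊓ t, G.min_mem s hsS t htS, fun j => ?_, fun j hj => ?_⟩
        · have hps : p j ≤ s j := by
            by_cases hji : j = i
            · subst hji; omega
            · exact hsge j hji
          exact le_inf hps (htge j)
        · rcases Finset.mem_insert.mp hj with h1 | h1
          · subst h1
            have : (s ⊓ t) j = min (s j) (t j) := rfl
            rw [this, hsi]; exact min_eq_left (htge j)
          · have hji : j ≠ i := fun hh => hni (hh ▸ h1)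
            have : (s ⊓ t) j = min (s j) (t j) := rfl
            rw [this, hteq j h1]
            exact min_eq_right (hsge j hji)
    obtain ⟨t, htS, _, hteq⟩ := key Finset.univ
    have : t = p := funext fun j => hteq j (Finset.mem_univ j)
    exact this ▸ htS

/-- a nonzero `p ≥ 0` is a generalized local minimum iff `Δ(p−𝟏) = ∅`,
and a local minimum iff additionally `p ∈ S`. -/
theorem stmt4 {r : ℕ} (G : GoodSemigroup r) (w : Pt r → ℤ) (hw : IsWeight G w)
    (p : Pt r) (hp0 : 0 ≤ p) (hpne : p ≠ 0) :
    (GLM w p ↔ Delta G.S (p - 1) = ∅) ∧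
    (LocMin w p ↔ (p ∈ G.S ∧ Delta G.S (p - 1) = ∅)) := by
  have hDelta : (Delta G.S (p - 1) = ∅) ↔ ∀ i, DeltaBarI G.S (p - E i) i = ∅ := by
    simp only [Delta, Set.iUnion_eq_empty, DeltaI_eq_bar]
  have hGLM : GLM w p ↔ Delta G.S (p - 1) = ∅ := by
    rw [hDelta]
    constructor
    · rintro ⟨-, hg⟩ i
      by_cases hpi : 1 ≤ p i
      · have hℓ : 0 ≤ p - E i := by
          intro j
          have h1 : (0:ℤ) ≤ p j := by simpa using hp0 j
          simp only [Pi.sub_apply, Pi.zero_apply, E_apply]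
          by_cases hji : j = i <;> simp [hji] <;> omega
        have heq : (p - E i) + E i = p := by abel
        have := (step_gt G w hw (p - E i) hℓ i)
        rw [heq] at this
        exact this.mp (hg i hpi)
      · rw [Set.eq_empty_iff_forall_notMem]
        rintro s ⟨hsS, hsi, -⟩
        have h0 : (0:ℤ) ≤ s i := by simpa using G.nonneg s hsS i
        have h1 : (p - E i) i = p i - 1 := by simp [E_apply]
        have h2 : (0:ℤ) ≤ p i := by simpa using hp0 i
        omega
    · intro h
      refine ⟨hp0, fun i hpi => ?_⟩
      have hℓ : 0 ≤ p - E i := by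
        intro j
        have h1 : (0:ℤ) ≤ p j := by simpa using hp0 j
        simp only [Pi.sub_apply, Pi.zero_apply, E_apply]
        by_cases hji : j = i <;> simp [hji] <;> omega
      have heq : (p - E i) + E i = p := by abel
      have := (step_gt G w hw (p - E i) hℓ i)
      rw [heq] at this
      exact this.mpr (h i)
  refine ⟨hGLM, ?_⟩
  constructor
  · rintro ⟨hg, hloc⟩
    refine ⟨?_, hGLM.mp hg⟩
    rw [mem_iff_bar G p hp0]
    intro i
    exact (step_lt G w hw p hp0 i).mp (hloc i)
  · rintro ⟨hpS, hD⟩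
    refine ⟨hGLM.mpr hD, fun i => ?_⟩
    exact (step_lt G w hw p hp0 i).mpr ((mem_iff_bar G p hp0).mp hpS i)
end

section
/- Let p be a generalized local minimum point of the weight function w of a good semigroup S, and let ℓ ∈ ℤ_{≥0}^r with ℓ + eᵢ ≤ p. If w(ℓ) < w(ℓ + eᵢ) then w(p − eᵢ − ℓ) > w(p − ℓ). -/
open Finset

/-- dual decrease lemma at a generalized local minimum. -/
theorem stmt7 {r : ℕ} (G : GoodSemigroup r) (w : Pt r → ℤ) (hw : IsWeight G w)
    (p : Pt r) (hp : GLM w p)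
    (ℓ : Pt r) (hl : 0 ≤ ℓ) (i : Fin r) (hle : ℓ + E i ≤ p)
    (hinc : w ℓ < w (ℓ + E i)) :
    w (p - ℓ) < w (p - E i - ℓ) := by
  classical
  obtain ⟨hw0, hstep⟩ := hw
  obtain ⟨hp0, hpmin⟩ := hp
  have hEi : ∀ j : Fin r, E (r := r) i j = if j = i then 1 else 0 := fun j =>
    Pi.single_apply i 1 j
  have hle' : ∀ j, ℓ j + (if j = i then (1:ℤ) else 0) ≤ p j := by
    intro j
    have h := hle j
    simpa [Pi.add_apply, hEi] using h
  have hpi : 1 ≤ p i := by have h1 := hle' i; have h2 : (0:ℤ) ≤ ℓ i := hl i; rw [if_pos rfl] at h1; omega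
  -- t ∈ Δ̄ᵢ(ℓ)
  have hT : (DeltaBarI G.S ℓ i).Nonempty := by
    by_contra hne
    have := (hstep ℓ hl i).2.mpr hne
    omega
  by_contra hcon
  push_neg at hcon
  set m : Pt r := p - E i - ℓ with hm
  have hm0 : (0 : Pt r) ≤ m := by
    intro j
    have h1 : ℓ j + E i j ≤ p j := hle j
    have h2 : (0:ℤ) ≤ ℓ j := hl j
    have h3 : (0:ℤ) ≤ E i j := by rw [hEi]; split_ifs <;> norm_num
    show (0:ℤ) ≤ p j - E i j - ℓ j
    omega
  have hmE : m + E i = p - ℓ := by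
    funext j
    simp [hm, Pi.add_apply, Pi.sub_apply]
    ring
  have hS : (DeltaBarI G.S m i).Nonempty := by
    by_contra hne
    have := (hstep m hm0 i).2.mpr hne
    rw [hmE] at this
    omega
  obtain ⟨t, htS, hti, htj⟩ := hT
  obtain ⟨s, hsS, hsi, hsj⟩ := hS
  have hq0 : (0 : Pt r) ≤ p - E i := by
    intro j
    show (0:ℤ) ≤ p j - E i j
    rw [hEi]
    split_ifs with h
    · subst h; omega
    · have h1 : (0:ℤ) ≤ p j := hp0 j
      omega
  have hu : s + t ∈ DeltaBarI G.S (p - E i) i := by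
    refine ⟨G.add_mem s hsS t htS, ?_, ?_⟩
    · simp only [Pi.add_apply, hsi, hti, hm, Pi.sub_apply]
      ring
    · intro j hj
      have h1 := hsj j hj
      have h2 := htj j hj
      simp only [hm, Pi.sub_apply, hEi, if_neg hj] at h1 ⊢
      simp only [Pi.add_apply]
      omega
  have hkey := (hstep (p - E i) hq0 i).1.mpr ⟨s + t, hu⟩
  have hpE : (p - E i) + E i = p := by funext j; simp [Pi.add_apply, Pi.sub_apply]
  rw [hpE] at hkey
  have := hpmin i hpi
  omega
end

section
/- If p is a generalized local minimum point of the weight function w of a good semigroup S with w(p) = 0, then w restricted to the box R(0,p) is symmetric: w(p − ℓ) = w(ℓ) for every lattice point ℓ with 0 ≤ ℓ ≤ p. -/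
open Finset

lemma E_self' {r : ℕ} (i : Fin r) : E i i = 1 := by simp [E]

lemma E_ne' {r : ℕ} {i j : Fin r} (h : j ≠ i) : E i j = 0 := by
  simp [E, Pi.single_eq_of_ne h]

lemma sum_E' {r : ℕ} (i : Fin r) : ∑ j, E i j = 1 := by
  simp [E, Pi.single_apply]

/-- Duality: on a step and its dual step (with respect to a GLM `p`), the weight
cannot increase on both, since otherwise witnesses of the two `Δ̄ᵢ` sets add up to
an element of `Δ̄ᵢ(p - eᵢ)`, contradicting the generalized local minimality of `p`. -/
lemma notBoth {r : ℕ} (G : GoodSemigroup r) (w : Pt r → ℤ) (hw : IsWeight G w)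
    {p : Pt r} (hp : GLM w p) {ℓ : Pt r} (hℓ : 0 ≤ ℓ) (i : Fin r)
    (hle : ℓ + E i ≤ p) :
    ¬((DeltaBarI G.S ℓ i).Nonempty ∧ (DeltaBarI G.S (p - ℓ - E i) i).Nonempty) := by
  rintro ⟨⟨s, hs, hsi, hsj⟩, ⟨t, ht, hti, htj⟩⟩
  have hEi : E i i = 1 := E_self' i
  have hpi : 1 ≤ p i := by
    have h1 := hle i
    have h2 := hℓ i
    simp only [Pi.add_apply, hEi] at h1
    simp only [Pi.zero_apply] at h2
    linarith
  -- s + t witnesses Δ̄ᵢ(p - eᵢ) ≠ ∅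
  have hmem : (s + t) ∈ DeltaBarI G.S (p - E i) i := by
    refine ⟨G.add_mem s hs t ht, ?_, ?_⟩
    · have : t i = p i - ℓ i - 1 := by
        simpa [hEi] using hti
      simp only [Pi.add_apply, Pi.sub_apply, hEi, hsi, this]; ring
    · intro j hj
      have hE0 : E i j = 0 := E_ne' hj
      have h1 := hsj j hj
      have h2 := htj j hj
      simp only [Pi.sub_apply, Pi.add_apply, hE0, sub_zero] at h2 ⊢
      linarith
  have hnn : (0 : Pt r) ≤ p - E i := by
    intro j
    by_cases hj : j = i
    · subst hj; simp only [Pi.zero_apply, Pi.sub_apply, hEi]; linarith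
    · have h3 := le_trans (hℓ j) (le_trans (by simp [E_ne' hj]) (hle j))
      simp only [Pi.zero_apply] at h3
      simp only [Pi.zero_apply, Pi.sub_apply, E_ne' hj, sub_zero]
      linarith
  have hw1 := (hw.2 (p - E i) hnn i).1.2 ⟨s + t, hmem⟩
  have hpe : (p - E i) + E i = p := by ring
  rw [hpe] at hw1
  have := hp.2 i hpi
  linarith

/-- The function `g(ℓ) = w(ℓ) - w(p - ℓ)` weakly decreases along a unit step in the box. -/
lemma g_step {r : ℕ} (G : GoodSemigroup r) (w : Pt r → ℤ) (hw : IsWeight G w)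
    {p : Pt r} (hp : GLM w p) {ℓ : Pt r} (hℓ : 0 ≤ ℓ) (i : Fin r)
    (hle : ℓ + E i ≤ p) :
    w (ℓ + E i) - w (p - (ℓ + E i)) ≤ w ℓ - w (p - ℓ) := by
  have hd : p - (ℓ + E i) = p - ℓ - E i := by ring
  have h0d : (0 : Pt r) ≤ p - ℓ - E i := by
    rw [← hd]; intro j
    have := hle j
    simp only [Pi.zero_apply, Pi.sub_apply, Pi.add_apply] at *
    linarith
  have hdual : (p - ℓ - E i) + E i = p - ℓ := by ring
  have hprim := hw.2 ℓ hℓ i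
  have hsec := hw.2 (p - ℓ - E i) h0d i
  rw [hdual] at hsec
  have hnb := notBoth G w hw hp hℓ i hle
  rw [hd]
  by_cases h1 : (DeltaBarI G.S ℓ i).Nonempty
  · have e1 := hprim.1.2 h1
    have h2 : ¬(DeltaBarI G.S (p - ℓ - E i) i).Nonempty := fun h2 => hnb ⟨h1, h2⟩
    have e2 := hsec.2.2 h2
    linarith
  · have e1 := hprim.2.2 h1
    by_cases h2 : (DeltaBarI G.S (p - ℓ - E i) i).Nonempty
    · have e2 := hsec.1.2 h2; linarith
    · have e2 := hsec.2.2 h2; linarith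

/-- `g` is weakly decreasing along the componentwise order on the box `R(0,p)`. -/
lemma g_mono {r : ℕ} (G : GoodSemigroup r) (w : Pt r → ℤ) (hw : IsWeight G w)
    {p : Pt r} (hp : GLM w p) :
    ∀ n : ℕ, ∀ a b : Pt r, 0 ≤ a → a ≤ b → b ≤ p → (∑ i, (b i - a i)) = (n : ℤ) →
      w b - w (p - b) ≤ w a - w (p - a) := by
  intro n
  induction n with
  | zero =>
    intro a b ha hab hbp hsum
    have : a = b := by
      funext j
      have hz : ∀ i ∈ Finset.univ, b i - a i = 0 := by
        rw [← Finset.sum_eq_zero_iff_of_nonneg]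
        · simpa using hsum
        · intro i _; have := hab i; linarith
      have := hz j (Finset.mem_univ j)
      linarith
    rw [this]
  | succ n ih =>
    intro a b ha hab hbp hsum
    -- find a coordinate where a < b
    have hne : ∃ i, a i < b i := by
      by_contra hc
      push_neg at hc
      have hz : ∀ i ∈ Finset.univ, b i - a i = 0 := fun i _ => by
        have := hab i; have := hc i; linarith
      rw [Finset.sum_congr rfl hz, Finset.sum_const_zero] at hsum
      omega
    obtain ⟨i, hi⟩ := hne
    set a' : Pt r := a + E i with ha'
    have ha'0 : (0 : Pt r) ≤ a' := by
      intro j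
      have hz := ha j
      simp only [Pi.zero_apply] at hz ⊢
      by_cases hj : j = i
      · subst hj; simp only [ha', Pi.add_apply, E_self' j]; linarith
      · simp only [ha', Pi.add_apply, E_ne' hj]; linarith
    have ha'b : a' ≤ b := by
      intro j
      by_cases hj : j = i
      · subst hj; simp only [ha', Pi.add_apply, E_self' j]; linarith
      · have := hab j; simp only [ha', Pi.add_apply, E_ne' hj]; linarith
    have ha'p : a' + 0 ≤ p := by simpa using le_trans ha'b hbp
    have hsum' : (∑ j, (b j - a' j)) = (n : ℤ) := by
      have : (∑ j, (b j - a' j)) = (∑ j, (b j - a j)) - ∑ j, E i j := by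
        rw [← Finset.sum_sub_distrib]
        congr 1
        funext j
        simp [ha']
        ring
      rw [this, hsum, sum_E' i]
      push_cast
      ring
    have step := g_step G w hw hp ha i (by simpa using ha'p)
    have tail := ih a' b ha'0 ha'b hbp hsum'
    calc w b - w (p - b) ≤ w a' - w (p - a') := tail
      _ ≤ w a - w (p - a) := step

/-- at a generalized local minimum of weight `0`, the weight function
is symmetric on the box `R(0,p)`. -/
theorem stmt9 {r : ℕ} (G : GoodSemigroup r) (w : Pt r → ℤ) (hw : IsWeight G w)
    (p : Pt r) (hp : GLM w p) (hp0 : w p = 0) :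
    ∀ ℓ : Pt r, 0 ≤ ℓ → ℓ ≤ p → w (p - ℓ) = w ℓ := by
  intro ℓ h0ℓ hℓp
  have hw0 : w 0 = 0 := hw.1
  -- g(0) = 0 and g(p) = 0
  have hg0 : w (0 : Pt r) - w (p - 0) = 0 := by
    simp [hw0, hp0]
  have hgp : w p - w (p - p) = 0 := by
    simp [hw0, hp0]
  -- sums are nonnegative integers
  have hs1 : (0:ℤ) ≤ ∑ i, (ℓ i - (0:Pt r) i) := by
    apply Finset.sum_nonneg
    intro i _
    have := h0ℓ i
    simpa using this
  have hs2 : (0:ℤ) ≤ ∑ i, (p i - ℓ i) := by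
    apply Finset.sum_nonneg
    intro i _
    have := hℓp i
    linarith
  have h1 := g_mono G w hw hp (∑ i, (ℓ i - (0:Pt r) i)).toNat 0 ℓ le_rfl h0ℓ hℓp
      (by rw [Int.toNat_of_nonneg hs1])
  have h2 := g_mono G w hw hp (∑ i, (p i - ℓ i)).toNat ℓ p h0ℓ hℓp le_rfl
      (by rw [Int.toNat_of_nonneg hs2])
  rw [hgp] at h2
  rw [hg0] at h1
  linarith
end

section
/- For a good semigroup S ⊂ ℤ_{≥0}^r with conductor c and weight function w, the following are equivalent: (i) w(c) = 0; (ii) w is Gorenstein symmetric, i.e., w(c − ℓ) = w(ℓ) for all lattice points 0 ≤ ℓ ≤ c; (iii) S is symmetric in the Garcia–Delgado sense: for all ℓ ∈ ℤ_{≥0}^r, ℓ ∈ S if and only if Δ(c − 𝟏 − ℓ) = ∅. -/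
open Finset

/-!
Put `f ℓ = w (c - ℓ) - w ℓ` on the box `0 ≤ ℓ ≤ c`, so that `f 0 = w c = -f c`. A unit step
`ℓ ↦ ℓ + eᵢ` changes `f` by `0` or by `2`: the two increments of `w` involved are governed by
`Δ̄ᵢ(ℓ)` and `Δ̄ᵢ(c - ℓ - eᵢ)`, which are never both nonempty (the sum of two of their elements
would lie in `Δ̄ᵢ(c - eᵢ) = ∅`), and the change is `2` exactly when both are empty. Hence `f` is
monotone, `w c ≤ 0`, and `w c = 0` iff `f` vanishes on the box (Gorenstein symmetry) iff the two
sets are never both empty. This last property links the weight to Garcia–Delgado symmetry: it turns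
`Δ(c - 𝟏 - ℓ) = ∅` into `Δ̄ᵢ(ℓ ⊓ c) ≠ ∅` for every `i`, so `ℓ ⊓ c ∈ S` and hence `ℓ ∈ S`;
conversely, under Garcia–Delgado symmetry a position where both sets are empty yields, through the
axiom on equal coordinates, another such position with smaller `|ℓ|`, which is absurd.
-/

namespace Pt

variable {r : ℕ}

@[simp] theorem E_self (i : Fin r) : E i i = 1 := Pi.single_eq_same i 1

@[simp] theorem E_of_ne {i j : Fin r} (h : j ≠ i) : E i j = 0 := Pi.single_eq_of_ne h 1

theorem E_apply (i j : Fin r) : E i j = if j = i then 1 else 0 := Pi.single_apply i 1 j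

theorem E_nonneg (i : Fin r) : 0 ≤ E i := Pi.single_nonneg.mpr zero_le_one

theorem sum_sub_E (x : Pt r) (i : Fin r) : ∑ j, (x - E i) j = ∑ j, x j - 1 := by
  simp only [Pi.sub_apply, Finset.sum_sub_distrib]
  simp [E]

theorem le_sub_E {x y : Pt r} {k : Fin r} (hxy : x ≤ y) (hk : x k < y k) : x ≤ y - E k :=
  fun j => by
    have h : x j ≤ y j := hxy j
    simp only [Pi.sub_apply, E_apply]
    split_ifs with hj
    · subst hj; omega
    · omega

theorem Icc_induction {lo hi : Pt r} {P : Pt r → Prop} (h0 : P lo)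
    (hstep : ∀ x i, lo ≤ x → x + E i ≤ hi → P x → P (x + E i)) :
    ∀ x, lo ≤ x → x ≤ hi → P x := by
  intro x hlo hhi
  by_cases hx : x = lo
  · exact hx ▸ h0
  obtain ⟨k, hk⟩ := (Pi.lt_def.mp (lt_of_le_of_ne hlo (Ne.symm hx))).2
  have hlo' : lo ≤ x - E k := le_sub_E hlo hk
  have hdec : (∑ j, (x - E k - lo) j).toNat < (∑ j, (x - lo) j).toNat := by
    have h1 : (x - lo) k ≤ ∑ j, (x - lo) j :=
      Finset.single_le_sum (fun j _ => sub_nonneg.mpr (hlo j)) (Finset.mem_univ k)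
    rw [sub_right_comm, sum_sub_E]
    simp only [Pi.sub_apply] at h1 ⊢
    omega
  have := Icc_induction h0 hstep (x - E k) hlo' (le_trans (sub_le_self x (E_nonneg k)) hhi)
  rw [← sub_add_cancel x (E k)]
  exact hstep (x - E k) k hlo' (by rwa [sub_add_cancel]) this
termination_by x => (∑ j, (x - lo) j).toNat
decreasing_by exact hdec

theorem monotoneOn_Icc_of_le_add_E {β : Type*} [Preorder β] {lo hi : Pt r} {f : Pt r → β}
    (hf : ∀ x i, lo ≤ x → x + E i ≤ hi → f x ≤ f (x + E i)) : MonotoneOn f (Set.Icc lo hi) :=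
  fun a ha b hb hab => Icc_induction (P := fun y => f a ≤ f y) le_rfl
    (fun x i hax hxi h => h.trans (hf x i (ha.1.trans hax) hxi)) b hab hb.2

end Pt

section Delta

variable {r : ℕ} {S : Set (Pt r)} {i : Fin r}

theorem self_mem_deltaBarI {ℓ : Pt r} (hℓ : ℓ ∈ S) : ℓ ∈ DeltaBarI S ℓ i :=
  ⟨hℓ, rfl, fun _ _ => le_rfl⟩

theorem deltaI_subset_deltaBarI (x : Pt r) : DeltaI S x i ⊆ DeltaBarI S (x + 1 - E i) i := by
  rintro s ⟨hs, hsi, hsj⟩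
  refine ⟨hs, by simp [hsi], fun j hj => ?_⟩
  have := hsj j hj
  simp only [Pi.sub_apply, Pi.add_apply, Pi.one_apply, Pt.E_of_ne hj]
  omega

theorem deltaBarI_subset_deltaI {x y : Pt r} (hi : y i = x i) (hlt : ∀ j, j ≠ i → x j < y j) :
    DeltaBarI S y i ⊆ DeltaI S x i :=
  fun _ ⟨hs, hsi, hsj⟩ => ⟨hs, hsi.trans hi, fun j hj => (hlt j hj).trans_le (hsj j hj)⟩

theorem deltaBarI_subset_deltaBarI {x y : Pt r} (hi : y i = x i) (hle : x ≤ y) :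
    DeltaBarI S y i ⊆ DeltaBarI S x i :=
  fun _ ⟨hs, hsi, hsj⟩ => ⟨hs, hsi.trans hi, fun j hj => (hle j).trans (hsj j hj)⟩

end Delta

namespace GoodSemigroup

variable {r : ℕ} (G : GoodSemigroup r)

/-- Symmetry in the sense of Garcia–Delgado. -/
def IsSymmetric : Prop :=
  ∀ ℓ : Pt r, 0 ≤ ℓ → (ℓ ∈ G.S ↔ Delta G.S (G.c - 1 - ℓ) = ∅)

theorem add_E_mem {p : Pt r} (hp : p ∈ G.S) {j : Fin r} (hj : G.c j ≤ p j) :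
    p + E j ∈ G.S := by
  classical
  -- `q` agrees with `p` only at `j`, so the good-semigroup axiom raises `p` at `j` alone
  set q := Function.update (p ⊔ G.c + 1) j (p j)
  have hq : q ∈ G.S := G.conductor_mem q fun k => by
    rcases eq_or_ne k j with rfl | hk
    · simpa [q] using hj
    · simp [q, hk]; omega
  obtain ⟨z, hz, hpz, hzj, hzk⟩ := G.prop3 p hp q hq j (by simp [q])
  set u := Function.update (p ⊔ G.c) j (p j + 1)
  have hu : u ∈ G.S := G.conductor_mem u fun k => by
    rcases eq_or_ne k j with rfl | hk
    · simp [u]; omega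
    · simp [u, hk]
  convert G.min_mem z hz u hu using 1
  funext k
  rcases eq_or_ne k j with rfl | hk
  · simp [u]; omega
  · have hpq : p k ≠ q k := by simp [q, hk]; omega
    have := hzk k hk hpq
    simp [u, q, hk] at this ⊢
    omega

theorem mem_of_inf_conductor_mem {m : Pt r} (h : m ⊓ G.c ∈ G.S) : m ∈ G.S :=
  Pt.Icc_induction (P := (· ∈ G.S)) h (fun x j hx hxj hxS => G.add_E_mem hxS (by
    have h1 : min (m j) (G.c j) ≤ x j := hx j
    have h2 : x j + E j j ≤ m j := hxj j
    rw [Pt.E_self] at h2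
    omega)) m inf_le_left le_rfl

theorem conductor_sub_E_notMem (i : Fin r) : G.c - E i ∉ G.S := by
  intro hci
  -- otherwise `c - eᵢ` would be a smaller conductor
  have hcm : ∀ m, G.c - E i ≤ m → m ⊓ G.c ∈ G.S := fun m hm => by
    by_cases hmi : G.c i ≤ m i
    · have hcm : G.c ≤ m := fun j => show G.c j ≤ m j by
        rcases eq_or_ne j i with rfl | hj
        · exact hmi
        · simpa [hj] using hm j
      rw [inf_eq_right.mpr hcm]
      exact G.conductor_mem _ le_rfl
    · convert hci using 1
      funext j
      have := hm j
      rcases eq_or_ne j i with rfl | hj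
      · simp at this ⊢; omega
      · simp [hj] at this ⊢; omega
  have := G.conductor_min _ (G.nonneg _ hci) (fun m hm => G.mem_of_inf_conductor_mem (hcm m hm)) i
  simp at this

theorem deltaBarI_conductor_sub_E_eq_empty (i : Fin r) : DeltaBarI G.S (G.c - E i) i = ∅ := by
  refine Set.eq_empty_of_forall_notMem fun v ⟨hv, hvi, hvj⟩ => G.conductor_sub_E_notMem i ?_
  convert G.min_mem v hv G.c (G.conductor_mem _ le_rfl) using 1
  funext j
  rcases eq_or_ne j i with rfl | hj
  · simp at hvi ⊢; omega
  · have := hvj j hj; simp [hj] at this ⊢; omega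

theorem add_mem_deltaBarI {s t x y : Pt r} {i : Fin r} (hs : s ∈ DeltaBarI G.S x i)
    (ht : t ∈ DeltaBarI G.S y i) : s + t ∈ DeltaBarI G.S (x + y) i :=
  ⟨G.add_mem s hs.1 t ht.1, by simp [hs.2.1, ht.2.1],
    fun j hj => add_le_add (hs.2.2 j hj) (ht.2.2 j hj)⟩

theorem not_deltaBarI_nonempty_and_dual {ℓ : Pt r} {i : Fin r} :
    ¬ ((DeltaBarI G.S ℓ i).Nonempty ∧ (DeltaBarI G.S (G.c - ℓ - E i) i).Nonempty) := by
  rintro ⟨⟨s, hs⟩, ⟨t, ht⟩⟩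
  have := G.add_mem_deltaBarI hs ht
  rw [show ℓ + (G.c - ℓ - E i) = G.c - E i by abel, G.deltaBarI_conductor_sub_E_eq_empty] at this
  exact this

theorem delta_conductor_sub_one_sub_eq_empty {ℓ : Pt r} (hℓ : ℓ ∈ G.S) :
    Delta G.S (G.c - 1 - ℓ) = ∅ := by
  refine Set.eq_empty_of_forall_notMem fun s hs => ?_
  obtain ⟨i, hsi⟩ := Set.mem_iUnion.mp hs
  have := G.add_mem_deltaBarI (deltaI_subset_deltaBarI _ hsi) (self_mem_deltaBarI (i := i) hℓ)
  rw [show G.c - 1 - ℓ + 1 - E i + ℓ = G.c - E i by abel,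
    G.deltaBarI_conductor_sub_E_eq_empty] at this
  exact this

theorem mem_of_forall_deltaBarI_nonempty {ℓ : Pt r} (h : ∀ i, (DeltaBarI G.S ℓ i).Nonempty) :
    ℓ ∈ G.S := by
  choose s hs using h
  suffices ∀ T : Finset (Fin r), ∃ x ∈ G.S, ℓ ≤ x ∧ ∀ i ∈ T, x i = ℓ i by
    obtain ⟨x, hx, hℓx, hxℓ⟩ := this Finset.univ
    rwa [le_antisymm (fun i => (hxℓ i (Finset.mem_univ i)).le) hℓx] at hx
  intro T
  induction T using Finset.induction_on with
  | empty => exact ⟨ℓ ⊔ G.c, G.conductor_mem _ le_sup_right, le_sup_left, by simp⟩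
  | insert i T _ ih =>
    obtain ⟨x, hx, hℓx, hxℓ⟩ := ih
    have hℓs : ℓ ≤ s i := fun j => by
      rcases eq_or_ne j i with rfl | hj
      · exact (hs j).2.1.ge
      · exact (hs i).2.2 j hj
    refine ⟨x ⊓ s i, G.min_mem x hx _ (hs i).1, le_inf hℓx hℓs, ?_⟩
    simp only [Finset.mem_insert, forall_eq_or_imp, Pi.inf_apply]
    exact ⟨by rw [(hs i).2.1]; exact inf_eq_right.mpr (hℓx i),
      fun j hj => by rw [hxℓ j hj]; exact inf_eq_left.mpr (hℓs j)⟩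

theorem deltaBarI_sub_E_not_nonempty {ℓ s : Pt r} {i k : Fin r} (hki : k ≠ i)
    (hA : ¬ (DeltaBarI G.S ℓ i).Nonempty) (hs : s ∈ G.S) (hsk : s k = ℓ k - 1)
    (hsi : ℓ i < s i) (hsj : ∀ j, j ≠ k → ℓ j ≤ s j) :
    ¬ (DeltaBarI G.S (ℓ - E k) i).Nonempty := by
  rintro ⟨v, hv, hvi, hvj⟩
  have hvi' : v i = ℓ i := by simpa [hki.symm] using hvi
  have hvj' : ∀ j, j ≠ i → j ≠ k → ℓ j ≤ v j := fun j hj hjk => by simpa [hjk] using hvj j hj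
  by_cases hvk : ℓ k ≤ v k
  · refine hA ⟨v, hv, hvi', fun j hj => ?_⟩
    rcases eq_or_ne j k with rfl | hjk
    · exact hvk
    · exact hvj' j hj hjk
  · -- `v` and `s` meet at `k` but differ at `i`; the axiom lifts `v ⊓ s` into `Δ̄ᵢ(ℓ)`
    have hvk' : v k = s k := by have := hvj k hki; simp at this; omega
    obtain ⟨z, hz, hvsz, hzk, hzj⟩ := G.prop3 v hv s hs k hvk'
    have hzi : z i = ℓ i := by
      rw [hzj i hki.symm (by omega), Pi.inf_apply, hvi']
      exact min_eq_left hsi.le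
    refine hA ⟨z, hz, hzi, fun j hj => ?_⟩
    rcases eq_or_ne j k with rfl | hjk
    · omega
    · exact le_inf (hvj' j hj hjk) (hsj j hjk) |>.trans (hvsz j)

theorem exists_deltaBarI_sub_E_not_nonempty (hG : G.IsSymmetric) {ℓ : Pt r} {i : Fin r}
    (hc : ℓ + E i ≤ G.c) (hA : ¬ (DeltaBarI G.S ℓ i).Nonempty)
    (hB : ¬ (DeltaBarI G.S (G.c - ℓ - E i) i).Nonempty) :
    ∃ k, k ≠ i ∧ 0 < ℓ k ∧ ¬ (DeltaBarI G.S (ℓ - E k) i).Nonempty := by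
  have hd : 0 ≤ G.c - ℓ - E i := by rwa [sub_sub, sub_nonneg]
  have hnotS : G.c - ℓ - E i ∉ G.S := fun hm => hB ⟨_, self_mem_deltaBarI hm⟩
  obtain ⟨s, hs⟩ := Set.nonempty_iff_ne_empty.mpr (mt (hG _ hd).mpr hnotS)
  rw [show G.c - 1 - (G.c - ℓ - E i) = ℓ + E i - 1 by abel] at hs
  obtain ⟨k, hsS, hsk, hsj⟩ := Set.mem_iUnion.mp hs
  have hki : k ≠ i := by
    rintro rfl
    have := deltaI_subset_deltaBarI _ ⟨hsS, hsk, hsj⟩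
    rw [sub_add_cancel, add_sub_cancel_right] at this
    exact hA ⟨s, this⟩
  have hsk' : s k = ℓ k - 1 := by simpa [hki] using hsk
  have hsj' : ∀ j, j ≠ k → ℓ j ≤ s j := fun j hj => by
    have h1 := hsj j hj
    have h2 : 0 ≤ E i j := Pt.E_nonneg i j
    simp only [Pi.sub_apply, Pi.add_apply, Pi.one_apply] at h1
    omega
  have hℓk : 0 < ℓ k := by have : 0 ≤ s k := G.nonneg s hsS k; omega
  exact ⟨k, hki, hℓk, G.deltaBarI_sub_E_not_nonempty hki hA hsS hsk'
    (by simpa using hsj i hki.symm) hsj'⟩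

theorem deltaBarI_nonempty_or_dual_of_isSymmetric (hG : G.IsSymmetric) {ℓ : Pt r} {i : Fin r}
    (hℓ : 0 ≤ ℓ) (hc : ℓ + E i ≤ G.c) :
    (DeltaBarI G.S ℓ i).Nonempty ∨ (DeltaBarI G.S (G.c - ℓ - E i) i).Nonempty := by
  by_contra h
  obtain ⟨hA, hB⟩ := not_or.mp h
  obtain ⟨k, hki, hℓk, hA'⟩ := G.exists_deltaBarI_sub_E_not_nonempty hG hc hA hB
  have hB' : ¬ (DeltaBarI G.S (G.c - (ℓ - E k) - E i) i).Nonempty := fun h =>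
    hB (h.mono (deltaBarI_subset_deltaBarI (by simp [Pt.E_of_ne hki.symm])
      (sub_le_sub_right (sub_le_sub_left (sub_le_self ℓ (Pt.E_nonneg k)) _) _)))
  have hc' : ℓ - E k + E i ≤ G.c := (add_le_add (sub_le_self ℓ (Pt.E_nonneg k)) le_rfl).trans hc
  have hdec : (∑ j, (ℓ - E k) j).toNat < (∑ j, ℓ j).toNat := by
    have : ℓ k ≤ ∑ j, ℓ j := Finset.single_le_sum (fun j _ => hℓ j) (Finset.mem_univ k)
    rw [Pt.sum_sub_E]; omega
  rcases deltaBarI_nonempty_or_dual_of_isSymmetric hG (Pt.le_sub_E hℓ hℓk) hc' with h | h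
  · exact hA' h
  · exact hB' h
termination_by (∑ j, ℓ j).toNat
decreasing_by exact hdec

end GoodSemigroup

namespace IsWeight

variable {r : ℕ} {G : GoodSemigroup r} {w : Pt r → ℤ}

open Classical in
theorem add_E (hw : IsWeight G w) {ℓ : Pt r} (hℓ : 0 ≤ ℓ) (i : Fin r) :
    w (ℓ + E i) = w ℓ + if (DeltaBarI G.S ℓ i).Nonempty then 1 else -1 := by
  split_ifs with h
  · exact (hw.2 ℓ hℓ i).1.mpr h
  · rw [(hw.2 ℓ hℓ i).2.mpr h, sub_eq_add_neg]

open Classical in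
theorem dual_sub_add_E (hw : IsWeight G w) {ℓ : Pt r} {i : Fin r} (hℓ : 0 ≤ ℓ)
    (hc : ℓ + E i ≤ G.c) :
    w (G.c - (ℓ + E i)) - w (ℓ + E i) = w (G.c - ℓ) - w ℓ +
      if (DeltaBarI G.S ℓ i).Nonempty ∨ (DeltaBarI G.S (G.c - ℓ - E i) i).Nonempty
      then 0 else 2 := by
  have h1 := hw.add_E hℓ i
  have h2 := hw.add_E (G := G) (ℓ := G.c - ℓ - E i) (by rwa [sub_sub, sub_nonneg]) i
  have h12 := G.not_deltaBarI_nonempty_and_dual (ℓ := ℓ) (i := i)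
  rw [sub_add_cancel] at h2
  rw [← sub_sub]
  split_ifs at h1 h2 ⊢ <;> first | omega | tauto

theorem dual_sub_monotoneOn (hw : IsWeight G w) :
    MonotoneOn (fun ℓ => w (G.c - ℓ) - w ℓ) (Set.Icc 0 G.c) :=
  Pt.monotoneOn_Icc_of_le_add_E fun ℓ i hℓ hc => by
    have := hw.dual_sub_add_E hℓ hc
    split_ifs at this <;> omega

theorem dual_eq_of_conductor_eq_zero (hw : IsWeight G w) (h : w G.c = 0) {ℓ : Pt r}
    (hℓ : 0 ≤ ℓ) (hℓc : ℓ ≤ G.c) : w (G.c - ℓ) = w ℓ := by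
  have h0 := hw.dual_sub_monotoneOn ⟨le_rfl, G.conductor_nonneg⟩ ⟨hℓ, hℓc⟩ hℓ
  have h1 := hw.dual_sub_monotoneOn ⟨hℓ, hℓc⟩ ⟨G.conductor_nonneg, le_rfl⟩ hℓc
  simp only [sub_zero, sub_self, hw.1, h] at h0 h1
  omega

theorem deltaBarI_nonempty_or_dual_of_dual_eq (hw : IsWeight G w)
    (hsymm : ∀ ℓ : Pt r, 0 ≤ ℓ → ℓ ≤ G.c → w (G.c - ℓ) = w ℓ) {ℓ : Pt r} {i : Fin r}
    (hℓ : 0 ≤ ℓ) (hc : ℓ + E i ≤ G.c) :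
    (DeltaBarI G.S ℓ i).Nonempty ∨ (DeltaBarI G.S (G.c - ℓ - E i) i).Nonempty := by
  have hstep := hw.dual_sub_add_E hℓ hc
  rw [hsymm ℓ hℓ ((le_add_of_nonneg_right (Pt.E_nonneg i)).trans hc),
    hsymm _ (hℓ.trans (le_add_of_nonneg_right (Pt.E_nonneg i))) hc] at hstep
  by_contra h
  rw [if_neg h] at hstep
  omega

theorem isSymmetric_of_dual_eq (hw : IsWeight G w)
    (hsymm : ∀ ℓ : Pt r, 0 ≤ ℓ → ℓ ≤ G.c → w (G.c - ℓ) = w ℓ) : G.IsSymmetric := by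
  intro ℓ hℓ
  refine ⟨G.delta_conductor_sub_one_sub_eq_empty, fun hΔ => ?_⟩
  refine G.mem_of_inf_conductor_mem (G.mem_of_forall_deltaBarI_nonempty fun i => ?_)
  by_cases hi : G.c i ≤ ℓ i
  · exact ⟨G.c, G.conductor_mem _ le_rfl, (min_eq_right hi).symm, fun j _ => inf_le_right⟩
  have hc : ℓ ⊓ G.c + E i ≤ G.c := fun j => show min (ℓ j) (G.c j) + E i j ≤ G.c j by
    rcases eq_or_ne j i with rfl | hj
    · simp; omega
    · simp [hj]
  refine (hw.deltaBarI_nonempty_or_dual_of_dual_eq hsymm (le_inf hℓ G.conductor_nonneg) hc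
    ).resolve_right fun ⟨s, hs⟩ => ?_
  have hs' := deltaBarI_subset_deltaI (x := G.c - 1 - ℓ) (by simp; omega) (fun j hj => by
    have : min (ℓ j) (G.c j) ≤ ℓ j := min_le_left _ _
    simp [hj]; omega) hs
  exact (hΔ ▸ Set.mem_iUnion.mpr ⟨i, hs'⟩ : s ∈ (∅ : Set (Pt r)))

theorem conductor_eq_zero_of_isSymmetric (hw : IsWeight G w) (hG : G.IsSymmetric) :
    w G.c = 0 := by
  have hconst := Pt.Icc_induction (P := fun ℓ => w (G.c - ℓ) - w ℓ = w G.c) (by simp [hw.1])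
    (fun ℓ i hℓ hc h => by
      rw [hw.dual_sub_add_E hℓ hc, if_pos (G.deltaBarI_nonempty_or_dual_of_isSymmetric hG hℓ hc),
        h, add_zero])
    G.c G.conductor_nonneg le_rfl
  simp only [sub_self, hw.1] at hconst
  omega

end IsWeight

/-- equivalence of (i) `w(c) = 0`, (ii) Gorenstein symmetry of `w`,
and (iii) symmetry of `S` in the sense of Garcia–Delgado. -/
theorem stmt12 {r : ℕ} (G : GoodSemigroup r) (w : Pt r → ℤ) (hw : IsWeight G w) :
    (w G.c = 0 ↔ ∀ ℓ : Pt r, 0 ≤ ℓ → ℓ ≤ G.c → w (G.c - ℓ) = w ℓ) ∧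
    (w G.c = 0 ↔ ∀ ℓ : Pt r, 0 ≤ ℓ →
        (ℓ ∈ G.S ↔ Delta G.S (G.c - 1 - ℓ) = ∅)) := by
  have hgor : w G.c = 0 ↔ ∀ ℓ : Pt r, 0 ≤ ℓ → ℓ ≤ G.c → w (G.c - ℓ) = w ℓ :=
    ⟨fun h _ hℓ hℓc => hw.dual_eq_of_conductor_eq_zero h hℓ hℓc,
      fun hsymm => by simpa [hw.1] using hsymm 0 le_rfl G.conductor_nonneg⟩
  exact ⟨hgor, fun h => hw.isSymmetric_of_dual_eq (hgor.mp h),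
    hw.conductor_eq_zero_of_isSymmetric⟩
end

section
/- Let S ⊂ ℤ_{≥0}^r be a good semigroup with weight function w. For any ℓ ∈ ℤ_{≥0}^r, any s ∈ S, and any coordinate i: w(ℓ + s) − w(ℓ) ≤ w(ℓ + s + eᵢ) − w(ℓ + eᵢ). Equivalently, w(ℓ + eᵢ) − w(ℓ) ≤ w(ℓ + s + eᵢ) − w(ℓ + s). -/
open Finset

/-- the shift lemma for the weight function. -/
theorem stmt14 {r : ℕ} (G : GoodSemigroup r) (w : Pt r → ℤ) (hw : IsWeight G w) :
    ∀ ℓ : Pt r, 0 ≤ ℓ → ∀ s ∈ G.S, ∀ i : Fin r,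
      w (ℓ + s) - w ℓ ≤ w (ℓ + s + E i) - w (ℓ + E i) := by
  intro ℓ hℓ s hs i
  have hs0 : (0 : Pt r) ≤ s := G.nonneg s hs
  have hℓs : (0 : Pt r) ≤ ℓ + s := le_trans hℓ (by intro j; simp [Pi.add_apply]; exact hs0 j)
  obtain ⟨h1, h2⟩ := (hw.2 ℓ hℓ i)
  obtain ⟨h3, h4⟩ := (hw.2 (ℓ + s) hℓs i)
  by_cases hne : (DeltaBarI G.S ℓ i).Nonempty
  · obtain ⟨x, hxS, hxi, hxj⟩ := hne
    have hne2 : (DeltaBarI G.S (ℓ + s) i).Nonempty := by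
      refine ⟨x + s, G.add_mem x hxS s hs, ?_, ?_⟩
      · simp [Pi.add_apply, hxi]
      · intro j hj
        simp only [Pi.add_apply]
        exact add_le_add (hxj j hj) le_rfl
    have e1 := h1.2 ⟨x, hxS, hxi, hxj⟩
    have e2 := h3.2 hne2
    linarith
  · have e1 := h2.2 hne
    by_cases hne2 : (DeltaBarI G.S (ℓ + s) i).Nonempty
    · have e2 := h3.2 hne2; linarith
    · have e2 := h4.2 hne2; linarith
end

section
/- Let S ⊂ ℤ_{≥0} be a numerical semigroup that is symmetric (Gorenstein) with multiplicity m = min(S \ {0}) ≥ 3, and suppose S ∩ (m, 2m) contains at most one element. Then every local minimum point p of the weight function w with p ∉ {0, c} satisfies w(p) ≤ w(m) = 2 − m. Consequently max{w(p) : p local minimum, w(p) < 0} = 2 − m (the Multiplicity Formula holds). -/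
/-!
Along `0, 1, 2, …` the weight `w(ℓ) = 2h(ℓ) - ℓ` goes up by one at elements of `S` and down by
one at gaps, so a local minimum `p ≠ 0` is an element of `S` with `p - 1 ∉ S`. Symmetry gives
`w(c - ℓ) = w(ℓ)`, so we may assume `2p ≤ c`. For `m < p < 2m` only `0` and `m` lie in `S`
below `p`. For `p ≥ 2m`, the involution `x ↦ p - 1 - x` of `[0, p)` never pairs two elements of
`S`, so `2h(p)` plus the number of gap–gap pairs is at most `p`. Every gap `x` in the window
`[p - m, p - 1)` is paired with a gap in `(0, m)`, and at most half of the window lies in `S`: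
the elements `x` of `S` there and the gaps `c - 1 - x` above them have pairwise distinct
residues mod `m`, because `S + m ⊆ S`. This yields at least `m - 2` gap–gap points, so
`2h(p) + m - 2 ≤ p`, i.e. `w(p) ≤ 2 - m`.
-/

open Finset

namespace NumericalSemigroup

open Classical

noncomputable def hilbert (S : Set ℤ) (ℓ : ℤ) : ℕ := #{x ∈ Ico 0 ℓ | x ∈ S}

noncomputable def weight (S : Set ℤ) (ℓ : ℤ) : ℤ := 2 * hilbert S ℓ - ℓ

def AddClosed (S : Set ℤ) : Prop := ∀ s ∈ S, ∀ t ∈ S, s + t ∈ S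

def IsSymmetric (S : Set ℤ) (c : ℤ) : Prop := ∀ ℓ : ℤ, 0 ≤ ℓ → (ℓ ∈ S ↔ c - 1 - ℓ ∉ S)

variable {S : Set ℤ} {c m p : ℤ}

section Counting

lemma hilbert_add_card {a b : ℤ} (ha : 0 ≤ a) (hab : a ≤ b) :
    hilbert S b = hilbert S a + #{x ∈ Ico a b | x ∈ S} := by
  rw [hilbert, hilbert, ← Ico_union_Ico_eq_Ico ha hab, filter_union,
    card_union_of_disjoint (disjoint_filter_filter (Ico_disjoint_Ico_consecutive 0 a b))]

lemma hilbert_succ {ℓ : ℤ} (hℓ : 0 ≤ ℓ) :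
    hilbert S (ℓ + 1) = hilbert S ℓ + if ℓ ∈ S then 1 else 0 := by
  have hIco : Ico ℓ (ℓ + 1) = {ℓ} := by ext x; simp only [mem_Ico, mem_singleton]; omega
  rw [hilbert_add_card hℓ (by omega), hIco, filter_singleton]
  split_ifs <;> rfl

lemma weight_succ {ℓ : ℤ} (hℓ : 0 ≤ ℓ) :
    weight S (ℓ + 1) = weight S ℓ + if ℓ ∈ S then 1 else -1 := by
  rw [weight, weight, hilbert_succ hℓ]
  split_ifs <;> push_cast <;> ring

lemma mem_of_weight_lt_weight_succ (hp : 0 ≤ p) (h : weight S p < weight S (p + 1)) :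
    p ∈ S := by
  by_contra hpS
  rw [weight_succ hp, if_neg hpS] at h
  omega

lemma sub_one_not_mem_of_weight_lt_weight_sub_one (hp : 1 ≤ p)
    (h : weight S p < weight S (p - 1)) : p - 1 ∉ S := by
  intro hpS
  have := weight_succ (S := S) (ℓ := p - 1) (by omega)
  rw [sub_add_cancel, if_pos hpS] at this
  omega

lemma card_not_mem_Ico {t : ℤ} (ht : 0 ≤ t) :
    (#{x ∈ Ico 0 t | x ∉ S} : ℤ) = t - hilbert S t := by
  have := card_filter_add_card_filter_not (s := Ico 0 t) (· ∈ S)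
  rw [Int.card_Ico, sub_zero] at this
  rw [hilbert]
  omega

end Counting

section Symmetric

lemma card_mem_Ico_sub_eq_card_not_mem_Ico (hsym : IsSymmetric S c) (t : ℤ) :
    #{x ∈ Ico (c - t) c | x ∈ S} = #{x ∈ Ico 0 t | x ∉ S} := by
  apply card_nbij' (c - 1 - ·) (c - 1 - ·)
  · intro x hx
    simp only [coe_filter, Set.mem_ofPred_eq, mem_Ico] at hx ⊢
    refine ⟨by omega, fun hx' => ?_⟩
    have := (hsym _ (by omega)).mp hx'
    rw [sub_sub_cancel] at this
    exact this hx.2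
  · intro x hx
    simp only [coe_filter, Set.mem_ofPred_eq, mem_Ico] at hx ⊢
    exact ⟨by omega, not_not.mp (mt (hsym x hx.1.1).mpr hx.2)⟩
  · exact fun x _ => sub_sub_cancel _ x
  · exact fun x _ => sub_sub_cancel _ x

lemma hilbert_eq_hilbert_sub_add (hsym : IsSymmetric S c) {t : ℤ}
    (ht : 0 ≤ t) (htc : t ≤ c) : (hilbert S c : ℤ) = hilbert S (c - t) + (t - hilbert S t) := by
  rw [hilbert_add_card (a := c - t) (b := c) (by omega) (by omega),
    card_mem_Ico_sub_eq_card_not_mem_Ico hsym, ← card_not_mem_Ico ht]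
  push_cast
  ring

lemma two_mul_hilbert_self (hsym : IsSymmetric S c) (hc : 0 ≤ c) :
    2 * (hilbert S c : ℤ) = c := by
  have := hilbert_eq_hilbert_sub_add hsym hc le_rfl
  have h0 : hilbert S 0 = 0 := by rw [hilbert, Ico_self, filter_empty, card_empty]
  rw [sub_self, h0] at this
  omega

lemma weight_sub (hsym : IsSymmetric S c) {t : ℤ}
    (ht : 0 ≤ t) (htc : t ≤ c) : weight S (c - t) = weight S t := by
  have := hilbert_eq_hilbert_sub_add hsym ht htc
  have := two_mul_hilbert_self hsym (ht.trans htc)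
  rw [weight, weight]
  omega

end Symmetric

section Multiplicity

lemma filter_mem_Ico_eq_singleton (hS0 : 0 ∈ S) (hmmin : ∀ s ∈ S, s ≠ 0 → m ≤ s) {t : ℤ}
    (ht1 : 1 ≤ t) (htm : t ≤ m) : ({x ∈ Ico 0 t | x ∈ S} : Finset ℤ) = {0} := by
  ext x
  simp only [mem_filter, mem_Ico, mem_singleton]
  constructor
  · rintro ⟨⟨hx0, hxt⟩, hxS⟩
    by_contra hx
    have := hmmin x hxS hx
    omega
  · rintro rfl
    exact ⟨⟨le_rfl, by omega⟩, hS0⟩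

lemma weight_eq_two_sub (hS0 : 0 ∈ S) (hmmin : ∀ s ∈ S, s ≠ 0 → m ≤ s) {t : ℤ}
    (ht1 : 1 ≤ t) (htm : t ≤ m) : weight S t = 2 - t := by
  rw [weight, hilbert, filter_mem_Ico_eq_singleton hS0 hmmin ht1 htm, card_singleton]
  rfl

lemma filter_mem_Ico_eq_pair (hS0 : 0 ∈ S) (hm : m ∈ S) (hmmin : ∀ s ∈ S, s ≠ 0 → m ≤ s)
    (hgap : ∀ p ∈ S, ∀ q ∈ S, m < p → p < 2 * m → m < q → q < 2 * m → p = q)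
    (hp : p ∈ S) (hmp : m < p) (hp2m : p < 2 * m) :
    ({x ∈ Ico 0 p | x ∈ S} : Finset ℤ) = {0, m} := by
  ext x
  simp only [mem_filter, mem_Ico, mem_insert, mem_singleton]
  constructor
  · rintro ⟨⟨hx0, hxp⟩, hxS⟩
    by_contra! hx
    have := hgap x hxS p hp (lt_of_le_of_ne (hmmin x hxS hx.1) hx.2.symm) (by omega) hmp hp2m
    omega
  · rintro (rfl | rfl)
    · exact ⟨⟨le_rfl, by omega⟩, hS0⟩
    · exact ⟨⟨by omega, hmp⟩, hm⟩

lemma weight_eq_four_sub (hS0 : 0 ∈ S) (hm : m ∈ S) (hmmin : ∀ s ∈ S, s ≠ 0 → m ≤ s)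
    (hgap : ∀ p ∈ S, ∀ q ∈ S, m < p → p < 2 * m → m < q → q < 2 * m → p = q)
    (hm0 : 0 < m) (hp : p ∈ S) (hmp : m < p) (hp2m : p < 2 * m) : weight S p = 4 - p := by
  rw [weight, hilbert, filter_mem_Ico_eq_pair hS0 hm hmmin hgap hp hmp hp2m,
    card_pair hm0.ne]
  ring

end Multiplicity

section Residues

lemma add_mul_mem (hSadd : AddClosed S) (hm : m ∈ S) {x : ℤ} (hx : x ∈ S)
    {j : ℤ} (hj : 0 ≤ j) : x + j * m ∈ S := by
  induction j, hj using Int.leInduction with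
  | base => simpa using hx
  | succ j _ ih => simpa [add_mul, ← add_assoc] using hSadd _ ih m hm

lemma not_modEq_of_mem_of_not_mem (hSadd : AddClosed S) (hm : m ∈ S)
    (hm0 : 0 < m) {x y : ℤ} (hx : x ∈ S) (hy : y ∉ S) (hxy : x ≤ y) : ¬x ≡ y [ZMOD m] := by
  intro h
  obtain ⟨j, hj⟩ := h.dvd
  have hj0 : 0 ≤ j := by nlinarith
  have hyx : y = x + j * m := by linarith
  exact hy (hyx ▸ add_mul_mem hSadd hm hx hj0)

lemma eq_of_modEq_of_mem_Ico {a x y : ℤ} (h : x ≡ y [ZMOD m]) (hx : x ∈ Ico a (a + m))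
    (hy : y ∈ Ico a (a + m)) : x = y := by
  rw [mem_Ico] at hx hy
  have := Int.eq_zero_of_abs_lt_dvd h.dvd (abs_sub_lt_iff.mpr ⟨by omega, by omega⟩)
  omega

/-- Reduction mod `m` is injective on `A ∪ B`: an element of `S` and a gap above it cannot be
congruent, since `S + m ⊆ S`. -/
lemma card_add_card_le (hSadd : AddClosed S) (hm : m ∈ S) (hm0 : 0 < m)
    {A B : Finset ℤ} {a b : ℤ} (hA : ∀ x ∈ A, x ∈ S) (hB : ∀ y ∈ B, y ∉ S)
    (hAB : ∀ x ∈ A, ∀ y ∈ B, x ≤ y) (hAa : A ⊆ Ico a (a + m)) (hBb : B ⊆ Ico b (b + m)) :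
    (#A + #B : ℤ) ≤ m := by
  have hdisj : Disjoint A B :=
    disjoint_left.mpr fun x hxA hxB => hB x hxB (hA x hxA)
  have hcard : #(A ∪ B) ≤ #(Ico 0 m) := by
    refine card_le_card_of_injOn (· % m) (fun x _ => ?_) fun x hx y hy hxy => ?_
    · simp only [coe_Ico, Set.mem_Ico]
      exact ⟨Int.emod_nonneg _ hm0.ne', Int.emod_lt_of_pos _ hm0⟩
    · simp only [coe_union, Set.mem_union, mem_coe] at hx hy
      have hxy : x ≡ y [ZMOD m] := hxy
      rcases hx with hx | hx <;> rcases hy with hy | hy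
      · exact eq_of_modEq_of_mem_Ico hxy (hAa hx) (hAa hy)
      · exact absurd hxy
          (not_modEq_of_mem_of_not_mem hSadd hm hm0 (hA x hx) (hB y hy) (hAB x hx y hy))
      · exact absurd hxy.symm
          (not_modEq_of_mem_of_not_mem hSadd hm hm0 (hA y hy) (hB x hx) (hAB y hy x hx))
      · exact eq_of_modEq_of_mem_Ico hxy (hBb hx) (hBb hy)
  rw [card_union_of_disjoint hdisj, Int.card_Ico] at hcard
  omega

end Residues

section GorensteinBound

lemma two_mul_hilbert_add_card_le (hSadd : AddClosed S) (hp0 : 0 ≤ p)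
    (hp : p - 1 ∉ S) :
    2 * (hilbert S p : ℤ) + #{x ∈ Ico 0 p | x ∉ S ∧ p - 1 - x ∉ S} ≤ p := by
  set T : Finset ℤ := {x ∈ Ico 0 p | x ∈ S}
  set D : Finset ℤ := {x ∈ Ico 0 p | x ∉ S ∧ p - 1 - x ∉ S}
  have hTD : Disjoint (T.image (p - 1 - ·)) D := by
    refine disjoint_left.mpr fun x hx hxD => ?_
    obtain ⟨y, hy, rfl⟩ := mem_image.mp hx
    simp only [T, D, mem_filter, sub_sub_cancel] at hy hxD
    exact hxD.2.2 hy.2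
  have hsub : T.image (p - 1 - ·) ∪ D ⊆ {x ∈ Ico 0 p | x ∉ S} := by
    refine union_subset (fun x hx => ?_) (fun x hx => ?_)
    · obtain ⟨y, hy, rfl⟩ := mem_image.mp hx
      simp only [T, mem_filter, mem_Ico] at hy ⊢
      refine ⟨by omega, fun hyS => hp ?_⟩
      simpa using hSadd _ hyS _ hy.2
    · simp only [D, mem_filter] at hx ⊢
      exact ⟨hx.1, hx.2.1⟩
  have := card_le_card hsub
  rw [card_union_of_disjoint hTD, card_image_of_injective _ sub_right_injective] at this
  have hT : hilbert S p = #T := rfl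
  have := card_not_mem_Ico (S := S) hp0
  omega

lemma two_mul_card_filter_not_mem_le (hmmin : ∀ s ∈ S, s ≠ 0 → m ≤ s) (hp : 2 * m ≤ p) :
    2 * #{x ∈ Ico (p - m) (p - 1) | x ∉ S} ≤ #{x ∈ Ico 0 p | x ∉ S ∧ p - 1 - x ∉ S} := by
  set E : Finset ℤ := {x ∈ Ico (p - m) (p - 1) | x ∉ S}
  have hsmall : ∀ x ∈ E, p - 1 - x ∉ S := fun x hx hxS => by
    simp only [E, mem_filter, mem_Ico] at hx
    have := hmmin _ hxS (by omega)
    omega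
  have hdisj : Disjoint E (E.image (p - 1 - ·)) := by
    refine disjoint_left.mpr fun x hx hx' => ?_
    obtain ⟨y, hy, rfl⟩ := mem_image.mp hx'
    simp only [E, mem_filter, mem_Ico] at hx hy
    omega
  have hsub : E ∪ E.image (p - 1 - ·) ⊆ {x ∈ Ico 0 p | x ∉ S ∧ p - 1 - x ∉ S} := by
    refine union_subset (fun x hx => ?_) (fun x hx => ?_)
    · have := hsmall x hx
      simp only [E, mem_filter, mem_Ico] at hx ⊢
      exact ⟨⟨by omega, by omega⟩, hx.2, this⟩
    · obtain ⟨y, hy, rfl⟩ := mem_image.mp hx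
      have := hsmall y hy
      simp only [E, mem_filter, mem_Ico, sub_sub_cancel] at hy ⊢
      exact ⟨⟨by omega, by omega⟩, this, hy.2⟩
  have := card_le_card hsub
  rwa [card_union_of_disjoint hdisj, card_image_of_injective _ sub_right_injective,
    ← two_mul] at this

lemma two_mul_card_filter_mem_le (hSadd : AddClosed S) (hm : m ∈ S)
    (hm0 : 0 < m) (hsym : IsSymmetric S c) (hmp : m ≤ p)
    (hpc : 2 * p ≤ c) : 2 * (#{x ∈ Ico (p - m) (p - 1) | x ∈ S} : ℤ) ≤ m := by
  set A : Finset ℤ := {x ∈ Ico (p - m) (p - 1) | x ∈ S}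
  have hA : ∀ x ∈ A, p - m ≤ x ∧ x < p - 1 ∧ x ∈ S := fun x hx => by
    simp only [A, mem_filter, mem_Ico] at hx
    exact ⟨hx.1.1, hx.1.2, hx.2⟩
  have := card_add_card_le hSadd hm hm0 (A := A) (B := A.image (c - 1 - ·)) (a := p - m)
    (b := c - p + 1) (fun x hx => (hA x hx).2.2)
    (fun y hy => by
      obtain ⟨x, hx, rfl⟩ := mem_image.mp hy
      exact (hsym x (by linarith [hA x hx])).mp (hA x hx).2.2)
    (fun x hx y hy => by
      obtain ⟨z, hz, rfl⟩ := mem_image.mp hy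
      linarith [hA x hx, hA z hz])
    (fun x hx => by simp only [mem_Ico]; constructor <;> linarith [hA x hx])
    (fun y hy => by
      obtain ⟨x, hx, rfl⟩ := mem_image.mp hy
      simp only [mem_Ico]; constructor <;> linarith [hA x hx])
  rwa [card_image_of_injective _ sub_right_injective, ← two_mul] at this

lemma two_mul_hilbert_add_le (hSadd : AddClosed S) (hm : m ∈ S)
    (hmmin : ∀ s ∈ S, s ≠ 0 → m ≤ s) (hm0 : 0 < m)
    (hsym : IsSymmetric S c) (hp : p - 1 ∉ S) (hmp : 2 * m ≤ p)
    (hpc : 2 * p ≤ c) : 2 * (hilbert S p : ℤ) + (m - 2) ≤ p := by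
  have hwindow := card_filter_add_card_filter_not (s := Ico (p - m) (p - 1)) (· ∈ S)
  rw [Int.card_Ico] at hwindow
  have := two_mul_hilbert_add_card_le hSadd (by omega) hp
  have := two_mul_card_filter_not_mem_le hmmin hmp
  have := two_mul_card_filter_mem_le hSadd hm hm0 hsym (by omega) hpc
  omega

end GorensteinBound

section LocalMinima

lemma weight_le_of_two_mul_le (hS0 : 0 ∈ S) (hSadd : AddClosed S)
    (hm : m ∈ S) (hmmin : ∀ s ∈ S, s ≠ 0 → m ≤ s) (hm0 : 0 < m)
    (hsym : IsSymmetric S c)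
    (hgap : ∀ p ∈ S, ∀ q ∈ S, m < p → p < 2 * m → m < q → q < 2 * m → p = q)
    (hp : p ∈ S) (hp1 : p - 1 ∉ S) (hp0 : p ≠ 0) (hpc : 2 * p ≤ c) : weight S p ≤ 2 - m := by
  have hmp := hmmin p hp hp0
  obtain rfl | hmp := hmp.eq_or_lt
  · exact (weight_eq_two_sub hS0 hmmin (by omega) le_rfl).le
  obtain hp2m | hp2m := lt_or_ge p (2 * m)
  · have : p - 1 ≠ m := fun h => hp1 (h ▸ hm)
    rw [weight_eq_four_sub hS0 hm hmmin hgap hm0 hp hmp hp2m]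
    omega
  · have := two_mul_hilbert_add_le hSadd hm hmmin hm0 hsym hp1 hp2m hpc
    rw [weight]
    omega

lemma weight_le_of_mem_of_sub_one_not_mem (hS0 : 0 ∈ S)
    (hSadd : AddClosed S) (hc : ∀ x : ℤ, c ≤ x → x ∈ S) (hm : m ∈ S)
    (hmmin : ∀ s ∈ S, s ≠ 0 → m ≤ s) (hm0 : 0 < m)
    (hsym : IsSymmetric S c)
    (hgap : ∀ p ∈ S, ∀ q ∈ S, m < p → p < 2 * m → m < q → q < 2 * m → p = q)
    (hp : p ∈ S) (hp1 : p - 1 ∉ S) (hp0 : p ≠ 0) (hpc : p ≠ c) : weight S p ≤ 2 - m := by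
  have hmp := hmmin p hp hp0
  have hpc : p < c := lt_of_le_of_ne (not_lt.mp fun h => hp1 (hc _ (by omega))) hpc
  obtain hp2c | hp2c := le_or_gt (2 * p) c
  · exact weight_le_of_two_mul_le hS0 hSadd hm hmmin hm0 hsym hgap hp hp1 hp0 hp2c
  · have hq : c - p ∈ S := by
      by_contra hq
      exact hp1 ((hsym _ (by omega)).mpr (by rwa [sub_sub_sub_cancel_right]))
    have hq1 : c - p - 1 ∉ S := by rw [sub_right_comm]; exact (hsym p (by omega)).mp hp
    rw [← weight_sub hsym (by omega) hpc.le]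
    exact weight_le_of_two_mul_le hS0 hSadd hm hmmin hm0 hsym hgap hq hq1 (by omega) (by omega)

end LocalMinima

end NumericalSemigroup

open NumericalSemigroup

open Classical in
theorem stmt16_general (S : Set ℤ) (hS0 : (0 : ℤ) ∈ S)
    (hSadd : ∀ s ∈ S, ∀ t ∈ S, s + t ∈ S)
    (c : ℤ) (hc : ∀ x : ℤ, c ≤ x → x ∈ S)
    (m : ℤ) (hm : m ∈ S) (hmmin : ∀ s ∈ S, s ≠ 0 → m ≤ s)
    (hm3 : 3 ≤ m)
    (hsym : ∀ ℓ : ℤ, 0 ≤ ℓ → (ℓ ∈ S ↔ c - 1 - ℓ ∉ S))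
    (hgap : ∀ p ∈ S, ∀ q ∈ S, m < p → p < 2 * m → m < q → q < 2 * m → p = q)
    (h w : ℤ → ℤ)
    (hh : ∀ ℓ : ℤ, 0 ≤ ℓ → h ℓ = ((Finset.Ico 0 ℓ).filter (· ∈ S)).card)
    (hw : ∀ ℓ : ℤ, w ℓ = 2 * h ℓ - ℓ) :
    (∀ p : ℤ, 0 ≤ p → ((1 ≤ p → w p < w (p - 1)) ∧ w p < w (p + 1)) →
      p ≠ 0 → p ≠ c → w p ≤ 2 - m) ∧
    ((1 ≤ m → w m < w (m - 1)) ∧ w m < w (m + 1)) ∧ w m = 2 - m := by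
  have hwS : ∀ ℓ, 0 ≤ ℓ → w ℓ = weight S ℓ := fun ℓ hℓ => by
    rw [hw, hh ℓ hℓ, weight, hilbert]
  have hwm : weight S m = 2 - m := weight_eq_two_sub hS0 hmmin (by omega) le_rfl
  refine ⟨fun p hp0 ⟨hpred, hsucc⟩ hpne0 hpc => ?_, ⟨fun _ => ?_, ?_⟩, ?_⟩
  · rw [hwS p hp0] at hsucc hpred ⊢
    rw [hwS _ (by omega)] at hsucc hpred
    exact weight_le_of_mem_of_sub_one_not_mem hS0 hSadd hc hm hmmin (by omega) hsym hgap
      (mem_of_weight_lt_weight_succ hp0 hsucc)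
      (sub_one_not_mem_of_weight_lt_weight_sub_one (by omega) (hpred (by omega))) hpne0 hpc
  · rw [hwS m (by omega), hwS _ (by omega), hwm,
      weight_eq_two_sub hS0 hmmin (by omega) (by omega)]
    omega
  · rw [hwS m (by omega), hwS _ (by omega), weight_succ (by omega), if_pos hm]
    omega
  · rw [hwS m (by omega), hwm]

open Classical in
theorem stmt16 (S : Set ℤ) (hS0 : (0 : ℤ) ∈ S) (hSnn : ∀ s ∈ S, 0 ≤ s)
    (hSadd : ∀ s ∈ S, ∀ t ∈ S, s + t ∈ S)
    (c : ℤ) (hc0 : 0 ≤ c) (hc : ∀ x : ℤ, c ≤ x → x ∈ S)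
    (hcmin : ∀ c' : ℤ, 0 ≤ c' → (∀ x : ℤ, c' ≤ x → x ∈ S) → c ≤ c')
    (m : ℤ) (hm : m ∈ S) (hmne : m ≠ 0) (hmmin : ∀ s ∈ S, s ≠ 0 → m ≤ s)
    (hm3 : 3 ≤ m)
    (hsym : ∀ ℓ : ℤ, 0 ≤ ℓ → (ℓ ∈ S ↔ c - 1 - ℓ ∉ S))
    (hgap : ∀ p ∈ S, ∀ q ∈ S, m < p → p < 2 * m → m < q → q < 2 * m → p = q)
    (h w : ℤ → ℤ)
    (hh : ∀ ℓ : ℤ, 0 ≤ ℓ → h ℓ = ((Finset.Ico 0 ℓ).filter (· ∈ S)).card)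
    (hw : ∀ ℓ : ℤ, w ℓ = 2 * h ℓ - ℓ) :
    (∀ p : ℤ, 0 ≤ p → ((1 ≤ p → w p < w (p - 1)) ∧ w p < w (p + 1)) →
      p ≠ 0 → p ≠ c → w p ≤ 2 - m) ∧
    ((1 ≤ m → w m < w (m - 1)) ∧ w m < w (m + 1)) ∧ w m = 2 - m :=
  stmt16_general S hS0 hSadd c hc m hm hmmin hm3 hsym hgap h w hh hw
end
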